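/- For any g ∈ L²([L]×X, P), define g_i(x) = g(i,x) and ḡ(i,j) = ∫_{X⁰} g(i,x) p_{(i,j)}(x)/P_{(i,j)}(X⁰) dx. Let Ē^I(ḡ,ḡ) = (1/(2θ)) ∑_{j=1}^n ∑_{i,i'∈[L]: i'=i±1} (ḡ(i,j) − ḡ(i',j))² r_i w_{(i,j)} P_{(i,j)}(X⁰) M̄((i,j),(i',j)), where θ = P([L]×X⁰). Then Ē^I(ḡ,ḡ) ≤ (3λ/θ) ∑_{i=1}^L ∑_{j=1}^n ( r_i w_{(i,j)} / P_{(i,j)}(X⁰) ) Var_{P_{(i,j)},X⁰}(g_i) + (3λ/θ) E^I_{X⁰}(g,g), where Var_{P_{(i,j)},X⁰}(g_i) = (1/2) ∫_{X⁰}∫_{X⁰} (g_i(x)−g_i(y))² P_{(i,j)}(dx) P_{(i,j)}(dy) and E^I_{X⁰}(g,g) = (1/4) ∑_{i,i'∈[L]: i'=i±1} ∫_{X⁰} (g(i,x) − g(i',x))² min{ r_i p_i(x), r_{i'} p_{i'}(x) } dx. -/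

import Mathlib

open MeasureTheory Finset

noncomputable section

/-- Adjacency of temperature levels: `i' = i ± 1`. -/
def adjacent {L : ℕ} (i i' : Fin L) : Prop :=
  (i' : ℕ) = (i : ℕ) + 1 ∨ (i : ℕ) = (i' : ℕ) + 1

instance {L : ℕ} (i i' : Fin L) : Decidable (adjacent i i') := by
  unfold adjacent; infer_instance

/-- The `S`-restricted variance `(1/2) ∫_S ∫_S (g(b) - g(a))² Π(da) Π(db)`. -/
def restVar {Ω : Type*} [MeasurableSpace Ω] (Pi : Measure Ω) (S : Set Ω) (g : Ω → ℝ) : ℝ :=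
  (1 / 2) * ∫ a in S, (∫ b in S, (g b - g a) ^ 2 ∂Pi) ∂Pi

/-- The stationary measure of the simulated tempering chain: density `p(i,x) = rᵢ pᵢ(x)`. -/
def stStat {X : Type*} [MeasurableSpace X] (ν : Measure X) {L : ℕ}
    (r : Fin L → ℝ) (p : Fin L → X → ℝ) : Measure (Fin L × X) :=
  Measure.sum fun i =>
    ENNReal.ofReal (r i) • ((ν.withDensity fun x => ENNReal.ofReal (p i x)).map fun x => (i, x))

/-! Each edge term of `Ē^I` equals `(λ/2) (ḡ(i,j) - ḡ(i',j))² ∫_{X⁰} min(a_{i'j}, a_{ij})`, where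
`a_{ij} = r_i w_{ij} p_{(i,j)}` is the density of the part of `P` carried by the component `(i,j)`.
Inserting `g_i(x)` and `g_{i'}(x)` gives
`(u - u')² ≤ 3((g_i(x) - u)² + (g_i(x) - g_{i'}(x))² + (g_{i'}(x) - u')²)`; bound the minimum by
`a_{ij}`, by itself and by `a_{i'j}` in the three terms. The outer terms integrate to the
component variances `(r_i w_{ij} / P_{(i,j)}(X⁰)) Var_{P_{(i,j)},X⁰}(g_i)`, each counted at most
four times since every level has at most two neighbours; the middle terms sum over `j` to at most
`∫ (g_i - g_{i'})² min(r_i p_i, r_{i'} p_{i'})`, a sum of minima being at most the minimum of the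
sums. -/

-- Also at `B = 0`, where `A / 0 = 0`: the densities in `M̄` need not be positive.
lemma mul_min_div_one {A B : ℝ} (hA : 0 ≤ A) (hB : 0 ≤ B) : B * min (A / B) 1 = min A B := by
  rcases hB.eq_or_lt with rfl | hB
  · simp [hA]
  · rw [mul_min_of_nonneg _ _ hB.le, mul_div_cancel₀ _ hB.ne', mul_one]

lemma sq_sub_mul_min_le {u u' v v' A B : ℝ} (hA : 0 ≤ A) (hB : 0 ≤ B) :
    (u - u') ^ 2 * min A B
      ≤ 3 * ((v - u) ^ 2 * B + (v - v') ^ 2 * min A B + (v' - u') ^ 2 * A) := by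
  have hsq : (u - u') ^ 2 ≤ 3 * ((v - u) ^ 2 + (v - v') ^ 2 + (v' - u') ^ 2) := by
    nlinarith [sq_nonneg (v - u + (v - v')), sq_nonneg (v - v' - (v' - u')),
      sq_nonneg (v - u - (v' - u'))]
  nlinarith [mul_le_mul_of_nonneg_right hsq (le_min hA hB),
    mul_le_mul_of_nonneg_left (min_le_right A B) (sq_nonneg (v - u)),
    mul_le_mul_of_nonneg_left (min_le_left A B) (sq_nonneg (v' - u'))]

namespace MeasureTheory

variable {X : Type*} [MeasurableSpace X] {μ : Measure X} {f h M D : X → ℝ}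

lemma Integrable.sq_mul_of_le (hD : Integrable (fun x => f x ^ 2 * D x) μ) (hf : Measurable f)
    (hM : Measurable M) (hM0 : 0 ≤ M) (hMD : M ≤ D) : Integrable (fun x => f x ^ 2 * M x) μ :=
  hD.mono' ((hf.pow_const 2).mul hM).aestronglyMeasurable <| ae_of_all _ fun x => by
    rw [Real.norm_eq_abs, abs_of_nonneg (mul_nonneg (sq_nonneg _) (hM0 x))]
    exact mul_le_mul_of_nonneg_left (hMD x) (sq_nonneg _)

lemma Integrable.mul_of_sq_mul (hM : Integrable M μ) (h2 : Integrable (fun x => f x ^ 2 * M x) μ)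
    (hf : Measurable f) (hMm : Measurable M) (hM0 : 0 ≤ M) : Integrable (fun x => f x * M x) μ :=
  (h2.add hM).mono' (hf.mul hMm).aestronglyMeasurable <| ae_of_all _ fun x => by
    have habs : |f x| ≤ f x ^ 2 + 1 := by nlinarith [sq_nonneg (|f x| - 1), sq_abs (f x)]
    rw [Real.norm_eq_abs, abs_mul, abs_of_nonneg (hM0 x), Pi.add_apply]
    nlinarith [mul_le_mul_of_nonneg_right habs (hM0 x)]

lemma Integrable.sq_sub_mul (hf2 : Integrable (fun x => f x ^ 2 * M x) μ)
    (hh2 : Integrable (fun x => h x ^ 2 * M x) μ) (hf : Measurable f) (hh : Measurable h)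
    (hMm : Measurable M) (hM0 : 0 ≤ M) : Integrable (fun x => (f x - h x) ^ 2 * M x) μ :=
  ((hf2.add hh2).const_mul 2).mono' (((hf.sub hh).pow_const 2).mul hMm).aestronglyMeasurable <|
    ae_of_all _ fun x => by
      rw [Real.norm_eq_abs, abs_of_nonneg (mul_nonneg (sq_nonneg _) (hM0 x)), Pi.add_apply]
      nlinarith [mul_nonneg (sq_nonneg (f x + h x)) (hM0 x)]

lemma integral_sq_sub_const_mul (hM : Integrable M μ) (h1 : Integrable (fun x => f x * M x) μ)
    (h2 : Integrable (fun x => f x ^ 2 * M x) μ) (c : ℝ) :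
    ∫ x, (f x - c) ^ 2 * M x ∂μ
      = ∫ x, f x ^ 2 * M x ∂μ - 2 * c * ∫ x, f x * M x ∂μ + c ^ 2 * ∫ x, M x ∂μ := by
  have hexp : (fun x => (f x - c) ^ 2 * M x)
      = fun x => f x ^ 2 * M x - 2 * c * (f x * M x) + c ^ 2 * M x := by
    funext x; ring
  rw [hexp, integral_add ?_ (hM.const_mul _), integral_sub h2 (h1.const_mul _),
    integral_const_mul, integral_const_mul]
  exact h2.sub (h1.const_mul _)

lemma setIntegral_withDensity_ofReal {ν : Measure X} (hfm : Measurable f) (hf0 : 0 ≤ f)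
    {S : Set X} (hS : MeasurableSet S) (q : X → ℝ) :
    ∫ x in S, q x ∂(ν.withDensity fun x => ENNReal.ofReal (f x)) = ∫ x in S, f x * q x ∂ν := by
  rw [setIntegral_withDensity_eq_setIntegral_toReal_smul hfm.ennreal_ofReal
    (ae_of_all _ fun _ => ENNReal.ofReal_lt_top) q hS]
  simp_rw [ENNReal.toReal_ofReal (hf0 _), smul_eq_mul]

lemma sum_integral_mul_le_integral_mul {ι : Type*} {s : Finset ι} {F m : X → ℝ}
    {φ : ι → X → ℝ} (hF : 0 ≤ F)
    (hφ : ∀ j ∈ s, Integrable (fun x => F x * φ j x) μ) (hm : Integrable (fun x => F x * m x) μ)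
    (hφm : ∀ x, ∑ j ∈ s, φ j x ≤ m x) :
    ∑ j ∈ s, ∫ x, F x * φ j x ∂μ ≤ ∫ x, F x * m x ∂μ := by
  rw [← integral_finsetSum s hφ]
  refine integral_mono (integrable_finsetSum s hφ) hm fun x => ?_
  simp only [← mul_sum]
  exact mul_le_mul_of_nonneg_left (hφm x) (hF x)

end MeasureTheory

lemma restVar_withDensity_eq {X : Type*} [MeasurableSpace X] {ν : Measure X} {f q : X → ℝ}
    {S : Set X} (hS : MeasurableSet S) (hfm : Measurable f) (hf0 : 0 ≤ f)
    (hf : Integrable f (ν.restrict S)) (h1 : Integrable (fun x => q x * f x) (ν.restrict S))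
    (h2 : Integrable (fun x => q x ^ 2 * f x) (ν.restrict S)) :
    restVar (ν.withDensity fun x => ENNReal.ofReal (f x)) S q
      = (∫ x in S, f x ∂ν) * (∫ x in S, q x ^ 2 * f x ∂ν) - (∫ x in S, q x * f x ∂ν) ^ 2 := by
  set P := ∫ x in S, f x ∂ν
  set I1 := ∫ x in S, q x * f x ∂ν
  set I2 := ∫ x in S, q x ^ 2 * f x ∂ν
  have hinner : ∀ a, ∫ b in S, (q b - q a) ^ 2 ∂(ν.withDensity fun x => ENNReal.ofReal (f x))
      = I2 - 2 * q a * I1 + q a ^ 2 * P := fun a => by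
    rw [setIntegral_withDensity_ofReal hfm hf0 hS, ← integral_sq_sub_const_mul hf h1 h2]
    simp_rw [mul_comm (f _)]
  have hexp : (fun a => f a * (I2 - 2 * q a * I1 + q a ^ 2 * P))
      = fun a => I2 * f a - 2 * I1 * (q a * f a) + P * (q a ^ 2 * f a) := by
    funext a; ring
  unfold restVar
  rw [setIntegral_withDensity_ofReal hfm hf0 hS]
  simp_rw [hinner]
  rw [hexp, integral_add ?_ (h2.const_mul _), integral_sub (hf.const_mul _) (h1.const_mul _),
    integral_const_mul, integral_const_mul, integral_const_mul]
  · ring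
  · exact (hf.const_mul _).sub (h1.const_mul _)

lemma div_mul_restVar_withDensity_eq {X : Type*} [MeasurableSpace X] {ν : Measure X}
    {f q : X → ℝ} {S : Set X} {k P : ℝ} (hS : MeasurableSet S) (hfm : Measurable f)
    (hf0 : 0 ≤ f) (hP : P = ∫ x in S, f x ∂ν) (hP0 : 0 < P) (hq : Measurable q)
    (hkq : Integrable (fun x => q x ^ 2 * (k * f x)) (ν.restrict S)) :
    k / P * restVar (ν.withDensity fun x => ENNReal.ofReal (f x)) S q
      = ∫ x in S, (q x - ∫ y in S, q y * (f y / P) ∂ν) ^ 2 * (k * f x) ∂ν := by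
  rcases eq_or_ne k 0 with rfl | hk
  · simp
  have hf : Integrable f (ν.restrict S) := .of_integral_ne_zero (hP ▸ hP0.ne')
  have h2 : Integrable (fun x => q x ^ 2 * f x) (ν.restrict S) :=
    (hkq.const_mul k⁻¹).congr (ae_of_all _ fun x => by field_simp)
  have h1 := hf.mul_of_sq_mul h2 hq hfm hf0
  have hmean : ∫ y in S, q y * (f y / P) ∂ν = (∫ y in S, q y * f y ∂ν) / P := by
    simp_rw [mul_div_assoc', integral_div]
  simp_rw [hmean, mul_left_comm _ k]
  rw [restVar_withDensity_eq hS hfm hf0 hf h1 h2, integral_const_mul,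
    integral_sq_sub_const_mul hf h1 h2, ← hP]
  field_simp
  ring

lemma projected_edge_le {X : Type*} [MeasurableSpace X] {μ : Measure X}
    {f f' pc a' : X → ℝ} {u u' k P lam : ℝ} (hlam : 0 ≤ lam) (hP : P ≠ 0) (hk : 0 ≤ k)
    (hpc : 0 ≤ pc) (ha' : 0 ≤ a')
    (h1 : Integrable (fun x => (f x - u) ^ 2 * (k * pc x)) μ)
    (h2 : Integrable (fun x => (f x - f' x) ^ 2 * min (a' x) (k * pc x)) μ)
    (h3 : Integrable (fun x => (f' x - u') ^ 2 * a' x) μ) :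
    (u - u') ^ 2 * (k * P) * (lam / 2 * ∫ x, pc x / P * min (a' x / (k * pc x)) 1 ∂μ)
      ≤ 3 * lam / 2 * (∫ x, (f x - u) ^ 2 * (k * pc x) ∂μ
        + ∫ x, (f x - f' x) ^ 2 * min (a' x) (k * pc x) ∂μ + ∫ x, (f' x - u') ^ 2 * a' x ∂μ) := by
  have hmin : ∀ x, k * P * (pc x / P * min (a' x / (k * pc x)) 1) = min (a' x) (k * pc x) :=
    fun x => by
      rw [← mul_min_div_one (ha' x) (mul_nonneg hk (hpc x))]
      field_simp
  have hpt : ∀ x, (u - u') ^ 2 * min (a' x) (k * pc x) ≤ 3 * ((f x - u) ^ 2 * (k * pc x)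
      + (f x - f' x) ^ 2 * min (a' x) (k * pc x) + (f' x - u') ^ 2 * a' x) :=
    fun x => sq_sub_mul_min_le (ha' x) (mul_nonneg hk (hpc x))
  calc (u - u') ^ 2 * (k * P) * (lam / 2 * ∫ x, pc x / P * min (a' x / (k * pc x)) 1 ∂μ)
      = lam / 2 * ∫ x, (u - u') ^ 2 * min (a' x) (k * pc x) ∂μ := by
        simp_rw [integral_const_mul, ← hmin, integral_const_mul]
        ring
    _ ≤ lam / 2 * ∫ x, 3 * ((f x - u) ^ 2 * (k * pc x)
          + (f x - f' x) ^ 2 * min (a' x) (k * pc x) + (f' x - u') ^ 2 * a' x) ∂μ := by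
        refine mul_le_mul_of_nonneg_left (integral_mono_of_nonneg
          (ae_of_all _ fun x => mul_nonneg (sq_nonneg _) (le_min (ha' x) (mul_nonneg hk (hpc x))))
          (((h1.add h2).add h3).const_mul 3) (ae_of_all _ hpt)) (by positivity)
    _ = _ := by
        rw [integral_const_mul, integral_add ?_ h3, integral_add h1 h2]
        · ring
        · exact h1.add h2

lemma adjacent_comm {L : ℕ} {i i' : Fin L} : adjacent i i' ↔ adjacent i' i := or_comm

lemma card_filter_adjacent_le_two {L : ℕ} (i : Fin L) : #{i' | adjacent i i'} ≤ 2 :=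
  calc #{i' | adjacent i i'} ≤ #({(i : ℕ) + 1, (i : ℕ) - 1} : Finset ℕ) :=
        card_le_card_of_injOn Fin.val
          (fun i' hi' => by
            rw [mem_coe, mem_filter] at hi'
            simp only [adjacent, coe_insert, coe_singleton, Set.mem_insert_iff,
              Set.mem_singleton_iff] at hi' ⊢
            omega)
          Fin.val_injective.injOn
    _ ≤ 2 := card_le_two

lemma sum_ite_adjacent_le {L : ℕ} (i : Fin L) {c : ℝ} (hc : 0 ≤ c) :
    ∑ i', (if adjacent i i' then c else 0) ≤ 2 * c := by
  rw [← sum_filter, sum_const, nsmul_eq_mul]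
  exact mul_le_mul_of_nonneg_right (by exact_mod_cast card_filter_adjacent_le_two i) hc

lemma sum_adjacent_add_le {L n : ℕ} (V : Fin L → Fin n → ℝ) (hV : 0 ≤ V)
    (D : Fin L → Fin L → Fin n → ℝ) (E : Fin L → Fin L → ℝ) (hDE : ∀ i i', ∑ j, D i i' j ≤ E i i') :
    ∑ j, ∑ i, ∑ i', (if adjacent i i' then V i j + D i i' j + V i' j else 0)
      ≤ 4 * ∑ i, ∑ j, V i j + ∑ i, ∑ i', if adjacent i i' then E i i' else 0 := by
  have hsplit : ∀ j i i', (if adjacent i i' then V i j + D i i' j + V i' j else 0)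
      = (if adjacent i i' then V i j else 0) + (if adjacent i i' then D i i' j else 0)
        + (if adjacent i' i then V i' j else 0) := fun j i i' => by
    by_cases h : adjacent i i'
    · simp [h, adjacent_comm.mp h]
    · simp [h, show ¬adjacent i' i from fun h' => h (adjacent_comm.mp h')]
  have hV2 : ∑ j, ∑ i, ∑ i', (if adjacent i i' then V i j else 0) ≤ 2 * ∑ i, ∑ j, V i j := by
    rw [sum_comm, mul_sum]
    gcongr with i
    rw [mul_sum]
    gcongr with j
    exact sum_ite_adjacent_le i (hV i j)
  have hD : ∑ j, ∑ i, ∑ i', (if adjacent i i' then D i i' j else 0)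
      ≤ ∑ i, ∑ i', if adjacent i i' then E i i' else 0 := by
    rw [sum_comm]
    gcongr with i
    rw [sum_comm]
    gcongr with i'
    split_ifs
    · exact hDE i i'
    · simp
  simp_rw [hsplit, sum_add_distrib]
  rw [sum_congr rfl fun j _ => sum_comm (f := fun i i' => if adjacent i' i then V i' j else 0)]
  linarith

lemma sum_adjacent_le_of_edge_le {L n : ℕ} {T : Fin n → Fin L → Fin L → ℝ}
    {V : Fin L → Fin n → ℝ} {D : Fin L → Fin L → Fin n → ℝ} {E : Fin L → Fin L → ℝ} {c : ℝ}
    (hc : 0 ≤ c) (hV : 0 ≤ V) (hT : ∀ j i i', T j i i' ≤ c * (V i j + D i i' j + V i' j))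
    (hDE : ∀ i i', ∑ j, D i i' j ≤ E i i') :
    ∑ j, ∑ i, ∑ i', (if adjacent i i' then T j i i' else 0)
      ≤ c * (4 * ∑ i, ∑ j, V i j + ∑ i, ∑ i', if adjacent i i' then E i i' else 0) :=
  calc ∑ j, ∑ i, ∑ i', (if adjacent i i' then T j i i' else 0)
      ≤ ∑ j, ∑ i, ∑ i', c * (if adjacent i i' then V i j + D i i' j + V i' j else 0) := by
        gcongr with j _ i _ i' _
        split_ifs
        exacts [hT j i i', by simp]
    _ ≤ _ := by
        simp only [← mul_sum]
        exact mul_le_mul_of_nonneg_left (sum_adjacent_add_le V hV D E hDE) hc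

section Mixture

variable {X : Type*} {L n : ℕ} {r : Fin L → ℝ} {w : Fin L → Fin n → ℝ}
  {pc : Fin L → Fin n → X → ℝ} {p : Fin L → X → ℝ}

lemma mixture_nonneg (hw : ∀ i j, 0 ≤ w i j) (hpc0 : ∀ i j x, 0 ≤ pc i j x)
    (hp : ∀ i x, p i x = ∑ j, w i j * pc i j x) (i : Fin L) : 0 ≤ p i := fun x =>
  hp i x ▸ sum_nonneg fun j _ => mul_nonneg (hw i j) (hpc0 i j x)

lemma sum_component_eq (hp : ∀ i x, p i x = ∑ j, w i j * pc i j x) (i : Fin L) (x : X) :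
    ∑ j, r i * w i j * pc i j x = r i * p i x := by
  simp only [hp, mul_sum, mul_assoc]

lemma component_nonneg (hr : ∀ i, 0 < r i) (hw : ∀ i j, 0 ≤ w i j)
    (hpc0 : ∀ i j x, 0 ≤ pc i j x) (i : Fin L) (j : Fin n) (x : X) :
    0 ≤ r i * w i j * pc i j x :=
  mul_nonneg (mul_nonneg (hr i).le (hw i j)) (hpc0 i j x)

lemma component_le_mixture (hr : ∀ i, 0 < r i) (hw : ∀ i j, 0 ≤ w i j)
    (hpc0 : ∀ i j x, 0 ≤ pc i j x) (hp : ∀ i x, p i x = ∑ j, w i j * pc i j x) (i : Fin L)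
    (j : Fin n) (x : X) : r i * w i j * pc i j x ≤ r i * p i x :=
  sum_component_eq hp i x ▸
    single_le_sum (fun k _ => component_nonneg hr hw hpc0 i k x) (mem_univ j)

end Mixture

section Tempering

variable {X : Type*} [MeasurableSpace X] {ν : Measure X} {L n : ℕ} {r : Fin L → ℝ}
  {w : Fin L → Fin n → ℝ} {pc : Fin L → Fin n → X → ℝ} {p : Fin L → X → ℝ}
  {g : Fin L × X → ℝ} {S : Set X}

lemma measurable_mixture (hpcm : ∀ i j, Measurable (pc i j))
    (hp : ∀ i x, p i x = ∑ j, w i j * pc i j x) (i : Fin L) : Measurable (p i) := by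
  rw [funext (hp i)]
  exact Finset.measurable_sum _ fun j _ => (hpcm i j).const_mul _

lemma integrable_sq_mul_of_le_stStat (hr : ∀ i, 0 < r i) (hp0 : ∀ i, 0 ≤ p i)
    (hpm : ∀ i, Measurable (p i)) (hgm : Measurable g) (hg : MemLp g 2 (stStat ν r p)) (i : Fin L)
    {M : X → ℝ} (hMm : Measurable M) (hM0 : 0 ≤ M) (hMp : ∀ x, M x ≤ r i * p i x) :
    Integrable (fun x => g (i, x) ^ 2 * M x) (ν.restrict S) := by
  have hi : Integrable (fun z => g z ^ 2)
      (ENNReal.ofReal (r i) • ((ν.withDensity fun x => ENNReal.ofReal (p i x)).map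
        fun x => (i, x))) :=
    hg.integrable_sq.mono_measure (Measure.le_sum _ i)
  rw [integrable_smul_measure (by simpa using hr i) ENNReal.ofReal_ne_top,
    integrable_map_measure (hgm.pow_const 2).aestronglyMeasurable
      measurable_prodMk_left.aemeasurable,
    integrable_withDensity_iff (hpm i).ennreal_ofReal (ae_of_all _ fun _ => ENNReal.ofReal_lt_top)]
    at hi
  refine ((hi.const_mul (r i)).congr (ae_of_all _ fun x => ?_)).restrict.sq_mul_of_le
    (hgm.comp measurable_prodMk_left) hMm hM0 hMp
  simp [ENNReal.toReal_ofReal (hp0 i x)]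
  ring

lemma integrable_sq_sub_mul_of_le_stStat (hr : ∀ i, 0 < r i) (hp0 : ∀ i, 0 ≤ p i)
    (hpm : ∀ i, Measurable (p i)) (hgm : Measurable g) (hg : MemLp g 2 (stStat ν r p))
    (i i' : Fin L) {M : X → ℝ} (hMm : Measurable M) (hM0 : 0 ≤ M)
    (hMp : ∀ x, M x ≤ r i * p i x) (hMp' : ∀ x, M x ≤ r i' * p i' x) :
    Integrable (fun x => (g (i, x) - g (i', x)) ^ 2 * M x) (ν.restrict S) :=
  (integrable_sq_mul_of_le_stStat hr hp0 hpm hgm hg i hMm hM0 hMp).sq_sub_mul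
    (integrable_sq_mul_of_le_stStat hr hp0 hpm hgm hg i' hMm hM0 hMp')
    (hgm.comp measurable_prodMk_left) (hgm.comp measurable_prodMk_left) hMm hM0

lemma integrable_sq_sub_const_mul_component (hr : ∀ i, 0 < r i) (hw : ∀ i j, 0 ≤ w i j)
    (hpc0 : ∀ i j x, 0 ≤ pc i j x) (hpcm : ∀ i j, Measurable (pc i j))
    (hp : ∀ i x, p i x = ∑ j, w i j * pc i j x) (hgm : Measurable g)
    (hg : MemLp g 2 (stStat ν r p)) (hpos : 0 < ∫ x in S, pc i j x ∂ν) (c : ℝ) :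
    Integrable (fun x => (g (i, x) - c) ^ 2 * (r i * w i j * pc i j x)) (ν.restrict S) :=
  (integrable_sq_mul_of_le_stStat hr (mixture_nonneg hw hpc0 hp) (measurable_mixture hpcm hp)
      hgm hg i ((hpcm i j).const_mul _) (component_nonneg hr hw hpc0 i j)
      (component_le_mixture hr hw hpc0 hp i j)).sq_sub_mul
    (((Integrable.of_integral_ne_zero hpos.ne').const_mul _).const_mul (c ^ 2))
    (hgm.comp measurable_prodMk_left) measurable_const ((hpcm i j).const_mul _)
    (component_nonneg hr hw hpc0 i j)

lemma integrable_sq_sub_mul_min_component (hr : ∀ i, 0 < r i) (hw : ∀ i j, 0 ≤ w i j)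
    (hpc0 : ∀ i j x, 0 ≤ pc i j x) (hpcm : ∀ i j, Measurable (pc i j))
    (hp : ∀ i x, p i x = ∑ j, w i j * pc i j x) (hgm : Measurable g)
    (hg : MemLp g 2 (stStat ν r p)) (i i' : Fin L) (j : Fin n) :
    Integrable (fun x => (g (i, x) - g (i', x)) ^ 2 *
      min (r i' * w i' j * pc i' j x) (r i * w i j * pc i j x)) (ν.restrict S) :=
  integrable_sq_sub_mul_of_le_stStat hr (mixture_nonneg hw hpc0 hp) (measurable_mixture hpcm hp)
    hgm hg i i' (((hpcm i' j).const_mul _).min ((hpcm i j).const_mul _))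
    (fun x => le_min (component_nonneg hr hw hpc0 i' j x) (component_nonneg hr hw hpc0 i j x))
    (fun x => (min_le_right _ _).trans (component_le_mixture hr hw hpc0 hp i j x))
    (fun x => (min_le_left _ _).trans (component_le_mixture hr hw hpc0 hp i' j x))

lemma component_restVar_eq (hr : ∀ i, 0 < r i) (hw : ∀ i j, 0 ≤ w i j)
    (hpc0 : ∀ i j x, 0 ≤ pc i j x) (hpcm : ∀ i j, Measurable (pc i j))
    (hp : ∀ i x, p i x = ∑ j, w i j * pc i j x) (hgm : Measurable g)
    (hg : MemLp g 2 (stStat ν r p)) (hS : MeasurableSet S) {P : ℝ}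
    (hP : P = ∫ x in S, pc i j x ∂ν) (hP0 : 0 < P) :
    r i * w i j / P * restVar (ν.withDensity fun x => ENNReal.ofReal (pc i j x)) S
        (fun x => g (i, x))
      = ∫ x in S, (g (i, x) - ∫ y in S, g (i, y) * (pc i j y / P) ∂ν) ^ 2
          * (r i * w i j * pc i j x) ∂ν :=
  div_mul_restVar_withDensity_eq hS (hpcm i j) (hpc0 i j) hP hP0 (hgm.comp measurable_prodMk_left)
    (integrable_sq_mul_of_le_stStat hr (mixture_nonneg hw hpc0 hp) (measurable_mixture hpcm hp)
      hgm hg i ((hpcm i j).const_mul _) (component_nonneg hr hw hpc0 i j)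
      (component_le_mixture hr hw hpc0 hp i j))

lemma edge_term_le (hr : ∀ i, 0 < r i) (hw : ∀ i j, 0 ≤ w i j)
    (hpc0 : ∀ i j x, 0 ≤ pc i j x) (hpcm : ∀ i j, Measurable (pc i j))
    (hp : ∀ i x, p i x = ∑ j, w i j * pc i j x) (hgm : Measurable g)
    (hg : MemLp g 2 (stStat ν r p)) (hpos : ∀ i j, 0 < ∫ x in S, pc i j x ∂ν) {lam : ℝ}
    (hlam : 0 ≤ lam) {P : ℝ} (hP : P = ∫ x in S, pc i j x ∂ν) (u u' : ℝ) (i' : Fin L) :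
    (u - u') ^ 2 * (r i * w i j * P) * (lam / 2 * ∫ x in S, pc i j x / P *
        min (r i' * w i' j * pc i' j x / (r i * w i j * pc i j x)) 1 ∂ν)
      ≤ 3 * lam / 2 * (∫ x in S, (g (i, x) - u) ^ 2 * (r i * w i j * pc i j x) ∂ν
        + ∫ x in S, (g (i, x) - g (i', x)) ^ 2 *
            min (r i' * w i' j * pc i' j x) (r i * w i j * pc i j x) ∂ν
        + ∫ x in S, (g (i', x) - u') ^ 2 * (r i' * w i' j * pc i' j x) ∂ν) :=
  projected_edge_le (a' := fun x => r i' * w i' j * pc i' j x) hlam (hP ▸ hpos i j).ne'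
    (mul_nonneg (hr i).le (hw i j)) (hpc0 i j) (component_nonneg hr hw hpc0 i' j)
    (integrable_sq_sub_const_mul_component hr hw hpc0 hpcm hp hgm hg (hpos i j) u)
    (integrable_sq_sub_mul_min_component hr hw hpc0 hpcm hp hgm hg i i' j)
    (integrable_sq_sub_const_mul_component hr hw hpc0 hpcm hp hgm hg (hpos i' j) u')

lemma sum_edge_integral_le (hr : ∀ i, 0 < r i) (hw : ∀ i j, 0 ≤ w i j)
    (hpc0 : ∀ i j x, 0 ≤ pc i j x) (hpcm : ∀ i j, Measurable (pc i j))
    (hp : ∀ i x, p i x = ∑ j, w i j * pc i j x) (hgm : Measurable g)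
    (hg : MemLp g 2 (stStat ν r p)) (i i' : Fin L) :
    ∑ j, ∫ x in S, (g (i, x) - g (i', x)) ^ 2 *
        min (r i' * w i' j * pc i' j x) (r i * w i j * pc i j x) ∂ν
      ≤ ∫ x in S, (g (i, x) - g (i', x)) ^ 2 * min (r i * p i x) (r i' * p i' x) ∂ν := by
  have hp0 := mixture_nonneg hw hpc0 hp
  have hpm := measurable_mixture hpcm hp
  refine sum_integral_mul_le_integral_mul (fun x => sq_nonneg _)
    (fun j _ => integrable_sq_sub_mul_min_component hr hw hpc0 hpcm hp hgm hg i i' j)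
    (integrable_sq_sub_mul_of_le_stStat hr hp0 hpm hgm hg i i'
      (((hpm i).const_mul _).min ((hpm i').const_mul _))
      (fun x => le_min (mul_nonneg (hr i).le (hp0 i x)) (mul_nonneg (hr i').le (hp0 i' x)))
      (fun x => min_le_left _ _) (fun x => min_le_right _ _)) fun x => ?_
  rw [← sum_component_eq hp i x, ← sum_component_eq hp i' x]
  exact le_min (sum_le_sum fun j _ => min_le_right _ _) (sum_le_sum fun j _ => min_le_left _ _)

end Tempering

theorem stmt3_general {X : Type*} [MeasurableSpace X] (ν : Measure X)
    (L n : ℕ)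
    (lam : ℝ) (hlam : lam ∈ Set.Ioo (0 : ℝ) 1)
    (r : Fin L → ℝ) (hr : ∀ i, 0 < r i)
    (w : Fin L → Fin n → ℝ) (hw : ∀ i j, 0 ≤ w i j)
    (pc : Fin L → Fin n → X → ℝ)
    (hpc0 : ∀ i j x, 0 ≤ pc i j x) (hpcm : ∀ i j, Measurable (pc i j))
    (X0 : Set X) (hX0 : MeasurableSet X0)
    (hpos : ∀ i j, 0 < ∫ x in X0, pc i j x ∂ν)
    (p : Fin L → X → ℝ) (hp : ∀ i x, p i x = ∑ j, w i j * pc i j x)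
    (PijX0 : Fin L → Fin n → ℝ) (hPij : ∀ i j, PijX0 i j = ∫ x in X0, pc i j x ∂ν)
    (θ : ℝ) (hθ : θ = ∑ i, r i * ∫ x in X0, p i x ∂ν)
    -- the function `g ∈ L²([L] × X, P)` and its projection `ḡ`
    (g : Fin L × X → ℝ) (hgm : Measurable g) (hg : MemLp g 2 (stStat ν r p))
    (gbar : Fin L → Fin n → ℝ)
    (hgbar : ∀ i j, gbar i j = ∫ x in X0, g (i, x) * (pc i j x / PijX0 i j) ∂ν)
    -- the between-level part `Ē^I` of the Dirichlet form of the projected chain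
    (EIbar : ℝ)
    (hEIbar : EIbar = (1 / (2 * θ)) * ∑ j : Fin n, ∑ i : Fin L, ∑ i' : Fin L,
      if adjacent i i' then
        (gbar i j - gbar i' j) ^ 2 * (r i * w i j * PijX0 i j) *
          ((lam / 2) * ∫ x in X0, (pc i j x / PijX0 i j) *
            min ((r i' * w i' j * pc i' j x) / (r i * w i j * pc i j x)) 1 ∂ν)
      else 0)
    -- the between-level part `E^I_{X⁰}(g,g)` of the Dirichlet form of the tempering chain
    (EIg : ℝ)
    (hEIg : EIg = (1 / 4) * ∑ i : Fin L, ∑ i' : Fin L,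
      if adjacent i i' then
        ∫ x in X0, (g (i, x) - g (i', x)) ^ 2 * min (r i * p i x) (r i' * p i' x) ∂ν
      else 0) :
    EIbar ≤ (3 * lam / θ) * (∑ i : Fin L, ∑ j : Fin n,
        (r i * w i j / PijX0 i j) *
          restVar (ν.withDensity fun x => ENNReal.ofReal (pc i j x)) X0 (fun x => g (i, x)))
      + (3 * lam / θ) * EIg := by
  have hθ0 : 0 ≤ θ := hθ ▸ sum_nonneg fun i _ =>
    mul_nonneg (hr i).le (integral_nonneg (mixture_nonneg hw hpc0 hp i))
  set V : Fin L → Fin n → ℝ := fun i j =>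
    ∫ x in X0, (g (i, x) - gbar i j) ^ 2 * (r i * w i j * pc i j x) ∂ν
  have hV0 : 0 ≤ V := fun i j => integral_nonneg fun x =>
    mul_nonneg (sq_nonneg _) (component_nonneg hr hw hpc0 i j x)
  have hVar : ∀ i j, (r i * w i j / PijX0 i j) *
      restVar (ν.withDensity fun x => ENNReal.ofReal (pc i j x)) X0 (fun x => g (i, x))
      = V i j := fun i j => by
    rw [component_restVar_eq hr hw hpc0 hpcm hp hgm hg hX0 (hPij i j) (hPij i j ▸ hpos i j),
      ← hgbar]
  have hedges := sum_adjacent_le_of_edge_le (by linarith [hlam.1] : 0 ≤ 3 * lam / 2) hV0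
    (fun j i i' =>
      edge_term_le hr hw hpc0 hpcm hp hgm hg hpos hlam.1.le (hPij i j) (gbar i j) (gbar i' j) i')
    (sum_edge_integral_le hr hw hpc0 hpcm hp hgm hg)
  simp only [hVar]
  subst hEIbar hEIg
  calc _ ≤ 1 / (2 * θ) * (3 * lam / 2 * _) :=
        mul_le_mul_of_nonneg_left hedges (by positivity)
    _ = _ := by ring

theorem stmt3 {X : Type*} [MeasurableSpace X] (ν : Measure X)
    (L n : ℕ) (hL : 2 ≤ L) (hn : 0 < n)
    (lam : ℝ) (hlam : lam ∈ Set.Ioo (0 : ℝ) 1)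
    (r : Fin L → ℝ) (hr : ∀ i, 0 < r i) (hr1 : ∑ i, r i = 1)
    (w : Fin L → Fin n → ℝ) (hw : ∀ i j, 0 ≤ w i j) (hw1 : ∀ i, ∑ j, w i j = 1)
    (pc : Fin L → Fin n → X → ℝ)
    (hpc0 : ∀ i j x, 0 ≤ pc i j x) (hpcm : ∀ i j, Measurable (pc i j))
    (hpc1 : ∀ i j, ∫ x, pc i j x ∂ν = 1)
    (X0 : Set X) (hX0 : MeasurableSet X0)
    (hpos : ∀ i j, 0 < ∫ x in X0, pc i j x ∂ν)
    (p : Fin L → X → ℝ) (hp : ∀ i x, p i x = ∑ j, w i j * pc i j x)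
    (PijX0 : Fin L → Fin n → ℝ) (hPij : ∀ i j, PijX0 i j = ∫ x in X0, pc i j x ∂ν)
    (θ : ℝ) (hθ : θ = ∑ i, r i * ∫ x in X0, p i x ∂ν)
    -- the function `g ∈ L²([L] × X, P)` and its projection `ḡ`
    (g : Fin L × X → ℝ) (hgm : Measurable g) (hg : MemLp g 2 (stStat ν r p))
    (gbar : Fin L → Fin n → ℝ)
    (hgbar : ∀ i j, gbar i j = ∫ x in X0, g (i, x) * (pc i j x / PijX0 i j) ∂ν)
    -- the between-level part `Ē^I` of the Dirichlet form of the projected chain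
    (EIbar : ℝ)
    (hEIbar : EIbar = (1 / (2 * θ)) * ∑ j : Fin n, ∑ i : Fin L, ∑ i' : Fin L,
      if adjacent i i' then
        (gbar i j - gbar i' j) ^ 2 * (r i * w i j * PijX0 i j) *
          ((lam / 2) * ∫ x in X0, (pc i j x / PijX0 i j) *
            min ((r i' * w i' j * pc i' j x) / (r i * w i j * pc i j x)) 1 ∂ν)
      else 0)
    -- the between-level part `E^I_{X⁰}(g,g)` of the Dirichlet form of the tempering chain
    (EIg : ℝ)
    (hEIg : EIg = (1 / 4) * ∑ i : Fin L, ∑ i' : Fin L,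
      if adjacent i i' then
        ∫ x in X0, (g (i, x) - g (i', x)) ^ 2 * min (r i * p i x) (r i' * p i' x) ∂ν
      else 0) :
    EIbar ≤ (3 * lam / θ) * (∑ i : Fin L, ∑ j : Fin n,
        (r i * w i j / PijX0 i j) *
          restVar (ν.withDensity fun x => ENNReal.ofReal (pc i j x)) X0 (fun x => g (i, x)))
      + (3 * lam / θ) * EIg :=
  stmt3_general ν L n lam hlam r hr w hw pc hpc0 hpcm X0 hX0 hpos p hp PijX0 hPij θ hθ g hgm hg gbar
    hgbar EIbar hEIbar EIg hEIg
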